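/- (Remark 1.3(2), second implication.) Given a Frobenius structure in flat coordinates on U ⊆ ℂ^m (with constant D) and a submanifold datum ι : W → U, suppose there exists a constant λ ∈ ℂ with A_{E_N^⊥} = λ·Id, i.e. ⟨h(X,Y), E_N^⊥⟩ = λ⟨X,Y⟩ for all tangent fields X,Y. Then the induced Euler condition holds with constant D_N = D + 2λ: ⟨∇_X E_N, Y⟩ + ⟨X, ∇_Y E_N⟩ = (D + 2λ)⟨X,Y⟩ for all tangent fields X,Y. -/

import Mathlib

open scoped BigOperators

noncomputable section

/-- A Frobenius structure in flat coordinates on a connected open set `U ⊆ ℂ^m`: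
a nondegenerate symmetric bilinear form, a holomorphic family of commutative
associative invariant products with constant unit `e`, potentiality, and a
holomorphic Euler field `E` with constant `Dconst`. The ambient Levi-Civita
connection is the directional derivative. -/
structure FrobeniusStructure (m : ℕ) where
  U : Set (Fin m → ℂ)
  U_open : IsOpen U
  U_conn : IsConnected U
  g : (Fin m → ℂ) →ₗ[ℂ] (Fin m → ℂ) →ₗ[ℂ] ℂ
  g_symm : ∀ x y, g x y = g y x
  g_nondeg : ∀ x, (∀ y, g x y = 0) → x = 0
  mul : (Fin m → ℂ) → (Fin m → ℂ) →ₗ[ℂ] (Fin m → ℂ) →ₗ[ℂ] (Fin m → ℂ)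
  mul_holo : ∀ x y, DifferentiableOn ℂ (fun p => mul p x y) U
  mul_comm : ∀ p x y, mul p x y = mul p y x
  mul_assoc : ∀ p x y z, mul p (mul p x y) z = mul p x (mul p y z)
  g_invariant : ∀ p x y z, g (mul p x y) z = g x (mul p y z)
  e : Fin m → ℂ
  e_unit : ∀ p x, mul p e x = x
  potential : ∀ p ∈ U, ∀ w x y z : Fin m → ℂ,
    fderiv ℂ (fun q => g (mul q x y) z) p w = fderiv ℂ (fun q => g (mul q w y) z) p x
  E : (Fin m → ℂ) → (Fin m → ℂ)
  E_holo : DifferentiableOn ℂ E U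
  Dconst : ℂ
  euler_metric : ∀ p ∈ U, ∀ x y : Fin m → ℂ,
    g (fderiv ℂ E p x) y + g x (fderiv ℂ E p y) = Dconst * g x y
  euler_prod : ∀ p ∈ U, ∀ x y : Fin m → ℂ,
    fderiv ℂ (fun q => mul q x y) p (E p) - fderiv ℂ E p (mul p x y)
      + mul p (fderiv ℂ E p x) y + mul p x (fderiv ℂ E p y) = mul p x y

/-- A submanifold datum: a holomorphic embedding `emb : W → U` of a connected
open set `W ⊆ ℂ^n`, with everywhere injective differential, such that the
metric restricted to the tangent spaces `T_pN = range (D emb)_w` is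
nondegenerate; `pr w` is the `g`-orthogonal projection onto the tangent space. -/
structure SubmanifoldDatum (m n : ℕ) (F : FrobeniusStructure m) where
  W : Set (Fin n → ℂ)
  W_open : IsOpen W
  W_conn : IsConnected W
  emb : (Fin n → ℂ) → (Fin m → ℂ)
  emb_holo : DifferentiableOn ℂ emb W
  emb_maps : ∀ w ∈ W, emb w ∈ F.U
  emb_inj : Set.InjOn emb W
  demb_inj : ∀ w ∈ W, Function.Injective (fderiv ℂ emb w)
  pr : (Fin n → ℂ) → (Fin m → ℂ) →ₗ[ℂ] (Fin m → ℂ)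
  pr_mem : ∀ w ∈ W, ∀ x, pr w x ∈ Set.range (fderiv ℂ emb w)
  pr_fix : ∀ w ∈ W, ∀ x ∈ Set.range (fderiv ℂ emb w), pr w x = x
  pr_orth : ∀ w ∈ W, ∀ x : Fin m → ℂ, ∀ y ∈ Set.range (fderiv ℂ emb w),
    F.g (x - pr w x) y = 0
  g_nondeg_tangent : ∀ w ∈ W, ∀ x ∈ Set.range (fderiv ℂ emb w),
    (∀ y ∈ Set.range (fderiv ℂ emb w), F.g x y = 0) → x = 0

namespace SubmanifoldDatum

variable {m n : ℕ} {F : FrobeniusStructure m}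

/-- The tangent space `T_pN` at `p = emb w`. -/
def T (S : SubmanifoldDatum m n F) (w : Fin n → ℂ) : Set (Fin m → ℂ) :=
  Set.range (fderiv ℂ S.emb w)

open Classical in
/-- The coordinate vector mapped by `(D emb)_w` to a tangent vector `v`
(junk value `0` if `v` is not tangent). -/
def lift (S : SubmanifoldDatum m n F) (w : Fin n → ℂ) (v : Fin m → ℂ) : Fin n → ℂ :=
  if h : v ∈ Set.range (fderiv ℂ S.emb w) then h.choose else 0

/-- A tangent field: a holomorphic map `W → ℂ^m` with values in the tangent spaces. -/
def IsTangentField (S : SubmanifoldDatum m n F) (X : (Fin n → ℂ) → (Fin m → ℂ)) : Prop :=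
  DifferentiableOn ℂ X S.W ∧ ∀ w ∈ S.W, X w ∈ S.T w

/-- `D_X Y`: the derivative of `Y` in the coordinate direction mapped by `D emb` to `X`. -/
def covD (S : SubmanifoldDatum m n F) (X Y : (Fin n → ℂ) → (Fin m → ℂ)) :
    (Fin n → ℂ) → (Fin m → ℂ) :=
  fun w => fderiv ℂ Y w (S.lift w (X w))

/-- The induced (Levi-Civita) connection `∇_X Y := pr (D_X Y)`. -/
def nabla (S : SubmanifoldDatum m n F) (X Y : (Fin n → ℂ) → (Fin m → ℂ)) :
    (Fin n → ℂ) → (Fin m → ℂ) :=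
  fun w => S.pr w (S.covD X Y w)

/-- The second fundamental form `h(X,Y) := (D_X Y)^⊥`. -/
def sff (S : SubmanifoldDatum m n F) (X Y : (Fin n → ℂ) → (Fin m → ℂ)) :
    (Fin n → ℂ) → (Fin m → ℂ) :=
  fun w => S.covD X Y w - S.pr w (S.covD X Y w)

/-- The shape operator `A_Ξ X := - pr (D_X Ξ)` of a normal field `Ξ`. -/
def shape (S : SubmanifoldDatum m n F) (Xi X : (Fin n → ℂ) → (Fin m → ℂ)) :
    (Fin n → ℂ) → (Fin m → ℂ) :=
  fun w => - S.pr w (S.covD X Xi w)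

/-- The Lie bracket of tangent fields. -/
def bracket (S : SubmanifoldDatum m n F) (X Y : (Fin n → ℂ) → (Fin m → ℂ)) :
    (Fin n → ℂ) → (Fin m → ℂ) :=
  fun w => S.covD X Y w - S.covD Y X w

/-- `e_N := pr e`, the tangential part of the unit field. -/
def eN (S : SubmanifoldDatum m n F) : (Fin n → ℂ) → (Fin m → ℂ) :=
  fun w => S.pr w F.e

/-- `E_N := pr (E ∘ emb)`, the tangential part of the Euler field. -/
def EN (S : SubmanifoldDatum m n F) : (Fin n → ℂ) → (Fin m → ℂ) :=
  fun w => S.pr w (F.E (S.emb w))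

/-- `E_N^⊥ := E ∘ emb - E_N`, the normal part of the Euler field. -/
def ENperp (S : SubmanifoldDatum m n F) : (Fin n → ℂ) → (Fin m → ℂ) :=
  fun w => F.E (S.emb w) - S.pr w (F.E (S.emb w))

/-- The induced product `X * Y := pr (X ∘ Y)`. -/
def star (S : SubmanifoldDatum m n F) (X Y : (Fin n → ℂ) → (Fin m → ℂ)) :
    (Fin n → ℂ) → (Fin m → ℂ) :=
  fun w => S.pr w (F.mul (S.emb w) (X w) (Y w))

/-- The induced metric is flat: the curvature of `∇` vanishes. -/
def FlatInduced (S : SubmanifoldDatum m n F) : Prop :=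
  ∀ X Y Z, S.IsTangentField X → S.IsTangentField Y → S.IsTangentField Z →
    ∀ w ∈ S.W,
      S.nabla X (S.nabla Y Z) w - S.nabla Y (S.nabla X Z) w
        - S.nabla (S.bracket X Y) Z w = 0

/-- The tangent spaces are closed under the ambient product:
`T_pN ∘_p T_pN ⊆ T_pN`. -/
def ClosedUnderMul (S : SubmanifoldDatum m n F) : Prop :=
  ∀ w ∈ S.W, ∀ x ∈ S.T w, ∀ y ∈ S.T w, F.mul (S.emb w) x y ∈ S.T w

/-- The covariant derivative 4-tensor
`(X', X, Y, Z) ↦ X'⟨X*Y, Z⟩ − ⟨(∇_{X'}X)*Y, Z⟩ − ⟨X*(∇_{X'}Y), Z⟩ − ⟨X*Y, ∇_{X'}Z⟩`. -/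
def ctensor (S : SubmanifoldDatum m n F) (X' X Y Z : (Fin n → ℂ) → (Fin m → ℂ)) :
    (Fin n → ℂ) → ℂ :=
  fun w => fderiv ℂ (fun v => F.g (S.star X Y v) (Z v)) w (S.lift w (X' w))
    - F.g (S.star (S.nabla X' X) Y w) (Z w)
    - F.g (S.star X (S.nabla X' Y) w) (Z w)
    - F.g (S.star X Y w) (S.nabla X' Z w)

/-- `N` is a Frobenius submanifold: the induced data satisfy the Frobenius
manifold axioms. -/
structure IsFrobeniusSub (S : SubmanifoldDatum m n F) : Prop where
  nabla_flat : S.FlatInduced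
  star_comm : ∀ X Y, S.IsTangentField X → S.IsTangentField Y →
    ∀ w ∈ S.W, S.star X Y w = S.star Y X w
  star_assoc : ∀ X Y Z, S.IsTangentField X → S.IsTangentField Y → S.IsTangentField Z →
    ∀ w ∈ S.W, S.star (S.star X Y) Z w = S.star X (S.star Y Z) w
  star_unit : ∀ X, S.IsTangentField X → ∀ w ∈ S.W, S.star X S.eN w = X w
  eN_flat : ∀ X, S.IsTangentField X → ∀ w ∈ S.W, S.nabla X S.eN w = 0
  star_invariant : ∀ X Y Z, S.IsTangentField X → S.IsTangentField Y → S.IsTangentField Z →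
    ∀ w ∈ S.W, F.g (S.star X Y w) (Z w) = F.g (X w) (S.star Y Z w)
  potential_symm : ∀ X' X Y Z, S.IsTangentField X' → S.IsTangentField X →
      S.IsTangentField Y → S.IsTangentField Z → ∀ w ∈ S.W,
    S.ctensor X' X Y Z w = S.ctensor X X' Y Z w ∧
    S.ctensor X' X Y Z w = S.ctensor X' Y X Z w ∧
    S.ctensor X' X Y Z w = S.ctensor X' X Z Y w
  euler_metric : ∃ DN : ℂ, ∀ X Y, S.IsTangentField X → S.IsTangentField Y →
    ∀ w ∈ S.W, F.g (S.nabla X S.EN w) (Y w) + F.g (X w) (S.nabla Y S.EN w)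
      = DN * F.g (X w) (Y w)
  euler_prod : ∀ X Y, S.IsTangentField X → S.IsTangentField Y → ∀ w ∈ S.W,
    S.nabla X (S.star Y S.EN) w - S.star (S.nabla X Y) S.EN w
      + S.star X (S.nabla Y S.EN) w - S.nabla (S.star X Y) S.EN w = S.star X Y w

/-- `N` is a natural Frobenius submanifold: a Frobenius submanifold whose
tangent spaces are closed under the ambient product. -/
def IsNaturalFrobeniusSub (S : SubmanifoldDatum m n F) : Prop :=
  S.IsFrobeniusSub ∧ S.ClosedUnderMul

end SubmanifoldDatum

/-!
Differentiating `⟨E_N, Y⟩ = ⟨E ∘ emb, Y⟩` along `X` and splitting `E ∘ emb = E_N + E_N^⊥` gives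
`⟨∇_X E_N, Y⟩ = ⟨(DE) X, Y⟩ + ⟨E_N^⊥, D_X Y⟩ = ⟨(DE) X, Y⟩ + ⟨h(X, Y), E_N^⊥⟩`,
so symmetrising in `X, Y` and using the ambient Euler condition yields `D + 2λ`.

The analytic input is that `E_N` is holomorphic. In the coordinate frame `∂ᵢ emb` its
coefficients are `G⁻¹ b`, with `G` the Gram matrix of the frame, which is invertible because the
metric is nondegenerate on the tangent spaces. The frame itself is holomorphic because a
directional derivative of a holomorphic map of several variables is holomorphic: it is a Cauchy
integral over a complex line, which may be differentiated under the integral sign thanks to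
Cauchy's estimate.
-/

open Complex Metric Filter Topology Real

section HolomorphicDerivative

variable {E F : Type*} [NormedAddCommGroup E] [NormedSpace ℂ E]
  [NormedAddCommGroup F] [NormedSpace ℂ F]

theorem add_smul_mem_closedBall {v u : E} {z : ℂ} {r : ℝ} (h : ‖z‖ * ‖u‖ ≤ r) :
    v + z • u ∈ closedBall v r := by
  rwa [mem_closedBall, dist_eq_norm, add_sub_cancel_left, norm_smul]

theorem HasFDerivAt.hasDerivAt_comp_line {f : E → F} {f' : E →L[ℂ] F} {v : E}
    (hf : HasFDerivAt f f' v) (u : E) :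
    HasDerivAt (fun z : ℂ => f (v + z • u)) (f' u) 0 := by
  have hline : HasDerivAt (fun z : ℂ => v + z • u) u 0 := by
    simpa using ((hasDerivAt_id (0 : ℂ)).smul_const u).const_add v
  exact hf.comp_hasDerivAt_of_eq 0 hline (by simp)

theorem norm_fderiv_le_of_forall_mem_closedBall {f : E → F} {v : E} {r M : ℝ} (hr : 0 < r)
    (hf : ∀ y ∈ closedBall v r, DifferentiableAt ℂ f y)
    (hM : ∀ y ∈ closedBall v r, ‖f y‖ ≤ M) :
    ‖fderiv ℂ f v‖ ≤ M / r := by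
  have hM0 : 0 ≤ M := (norm_nonneg _).trans (hM v (mem_closedBall_self hr.le))
  refine ContinuousLinearMap.opNorm_le_bound _ (by positivity) fun u => ?_
  rcases eq_or_ne u 0 with rfl | hu
  · simp
  have hu : 0 < ‖u‖ := norm_pos_iff.2 hu
  have hmem : ∀ z ∈ closedBall (0 : ℂ) (r / ‖u‖), v + z • u ∈ closedBall v r := fun z hz =>
    add_smul_mem_closedBall <| by
      rw [mem_closedBall_zero_iff, le_div_iff₀ hu] at hz
      exact hz
  have hline : DiffContOnCl ℂ (fun z : ℂ => f (v + z • u)) (ball 0 (r / ‖u‖)) := by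
    refine DifferentiableOn.diffContOnCl fun z hz => ?_
    rw [closure_ball _ (by positivity)] at hz
    exact ((hf _ (hmem z hz)).comp z
      ((differentiableAt_id.smul_const u).const_add v)).differentiableWithinAt
  rw [((hf v (mem_closedBall_self hr.le)).hasFDerivAt.hasDerivAt_comp_line u).deriv.symm]
  calc ‖deriv (fun z : ℂ => f (v + z • u)) 0‖ ≤ M / (r / ‖u‖) :=
        norm_deriv_le_of_forall_mem_sphere_norm_le (by positivity) hline
          fun z hz => hM _ (hmem z (sphere_subset_closedBall hz))
    _ = M / r * ‖u‖ := by field_simp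

theorem DifferentiableOn.exists_eventually_norm_fderiv_le {f : E → F} {W : Set E}
    (hW : IsOpen W) (hf : DifferentiableOn ℂ f W) {w : E} (hw : w ∈ W) :
    ∃ C, ∀ᶠ x in 𝓝 w, ‖fderiv ℂ f x‖ ≤ C := by
  have hnear : ∀ᶠ y in 𝓝 w, y ∈ W ∧ ‖f y‖ < ‖f w‖ + 1 :=
    (hW.eventually_mem hw).and <|
      (hf.continuousOn.continuousAt (hW.mem_nhds hw)).norm.eventually (gt_mem_nhds (lt_add_one _))
  obtain ⟨ε, hε, hball⟩ := nhds_basis_closedBall.eventually_iff.1 hnear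
  refine ⟨(‖f w‖ + 1) / (ε / 2), eventually_nhds_iff_ball.2 ⟨ε / 2, by positivity, fun x hx => ?_⟩⟩
  have hsub : closedBall x (ε / 2) ⊆ closedBall w ε :=
    closedBall_subset_closedBall' (by linarith [mem_ball.1 hx])
  exact norm_fderiv_le_of_forall_mem_closedBall (by positivity)
    (fun y hy => hf.differentiableAt (hW.mem_nhds (hball (hsub hy)).1))
    (fun y hy => (hball (hsub hy)).2.le)

theorem fderiv_apply_eq_circleIntegral [CompleteSpace F] {f : E → F} {v u : E} {s : ℝ}
    (hs : 0 < s) (hf : ∀ z ∈ closedBall (0 : ℂ) s, DifferentiableAt ℂ f (v + z • u)) :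
    fderiv ℂ f v u = (2 * π * I)⁻¹ • ∮ z in C(0, s), (1 / z ^ 2) • f (v + z • u) := by
  have hline : DifferentiableOn ℂ (fun z : ℂ => f (v + z • u)) (closedBall 0 s) := fun z hz =>
    ((hf z hz).comp z ((differentiableAt_id.smul_const u).const_add v)).differentiableWithinAt
  have hcauchy := hline.deriv_eq_smul_circleIntegral hs
  simp only [sub_zero] at hcauchy
  have hv : DifferentiableAt ℂ f v := by simpa using hf 0 (mem_closedBall_self hs.le)
  rw [hcauchy, inv_smul_smul₀ two_pi_I_ne_zero, (hv.hasFDerivAt.hasDerivAt_comp_line u).deriv]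

theorem differentiableAt_circleIntegral_smul_comp_line [FiniteDimensional ℂ E]
    [FiniteDimensional ℂ F] {f : E → F} {φ : ℂ → ℂ} {w u : E} {s C : ℝ} {N : Set E}
    (hN : N ∈ 𝓝 w) (hs : 0 ≤ s) (hφ : ContinuousOn φ (sphere 0 s))
    (hf : ∀ x ∈ N, ∀ z ∈ sphere (0 : ℂ) s, DifferentiableAt ℂ f (x + z • u))
    (hC : ∀ x ∈ N, ∀ z ∈ sphere (0 : ℂ) s, ‖fderiv ℂ f (x + z • u)‖ ≤ C) :
    DifferentiableAt ℂ (fun x => ∮ z in C(0, s), φ z • f (x + z • u)) w := by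
  borelize E
  set γ := circleMap (0 : ℂ) s
  have hγ : ∀ θ, γ θ ∈ sphere (0 : ℂ) s := circleMap_mem_sphere 0 hs
  set c : ℝ → ℂ := fun θ => deriv γ θ * φ (γ θ)
  have hc : Continuous c := by
    simp only [c, γ, deriv_circleMap]
    exact ((continuous_circleMap 0 s).mul continuous_const).mul
      (hφ.comp_continuous (continuous_circleMap 0 s) hγ)
  obtain ⟨K, hK⟩ := (isCompact_sphere (0 : ℂ) s).exists_bound_of_continuousOn hφ
  have hcK : ∀ θ, ‖c θ‖ ≤ s * K := fun θ => by
    simp only [c, γ, deriv_circleMap, norm_mul, norm_circleMap_zero, abs_of_nonneg hs, norm_I,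
      mul_one]
    exact mul_le_mul_of_nonneg_left (hK _ (hγ θ)) hs
  have hline : ∀ x : E, Continuous fun θ => x + γ θ • u := fun x =>
    continuous_const.add ((continuous_circleMap 0 s).smul continuous_const)
  have hcont : ∀ x ∈ N, Continuous fun θ => f (x + γ θ • u) := fun x hx =>
    continuous_iff_continuousAt.2 fun θ =>
      ContinuousAt.comp (g := f) (hf x hx _ (hγ θ)).continuousAt (hline x).continuousAt
  have hderiv : ∀ x ∈ N, ∀ θ, HasFDerivAt (fun y => c θ • f (y + γ θ • u))
      (c θ • fderiv ℂ f (x + γ θ • u)) x := fun x hx θ => by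
    have h := ((hf x hx _ (hγ θ)).hasFDerivAt.comp x
      ((hasFDerivAt_id x).add_const (γ θ • u))).const_smul (c θ)
    rw [ContinuousLinearMap.comp_id] at h
    exact h
  have key := intervalIntegral.hasFDerivAt_integral_of_dominated_of_fderiv_le
    (F := fun x θ => c θ • f (x + γ θ • u)) (μ := MeasureTheory.volume) (a := 0) (b := 2 * π)
    (bound := fun _ => s * K * C) hN
    (eventually_of_mem hN fun x hx => (hc.smul (hcont x hx)).aestronglyMeasurable)
    ((hc.smul (hcont w (mem_of_mem_nhds hN))).intervalIntegrable _ _)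
    ((hc.measurable.smul
      ((measurable_fderiv ℂ f).comp (hline w).measurable)).aestronglyMeasurable)
    (MeasureTheory.ae_of_all _ fun θ _ x hx => by
      rw [norm_smul]
      exact mul_le_mul (hcK θ) (hC x hx _ (hγ θ)) (norm_nonneg _)
        (mul_nonneg hs ((norm_nonneg _).trans (hK _ (hγ 0)))))
    intervalIntegrable_const
    (MeasureTheory.ae_of_all _ fun θ _ x hx => hderiv x hx θ)
  refine key.differentiableAt.congr_of_eventuallyEq (Eventually.of_forall fun x => ?_)
  simp only [circleIntegral, smul_smul, c, γ]

theorem DifferentiableOn.differentiableAt_fderiv_apply [FiniteDimensional ℂ E]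
    [FiniteDimensional ℂ F] {f : E → F} {W : Set E} (hW : IsOpen W)
    (hf : DifferentiableOn ℂ f W) {w : E} (hw : w ∈ W) (u : E) :
    DifferentiableAt ℂ (fun v => fderiv ℂ f v u) w := by
  obtain ⟨C, hC⟩ := hf.exists_eventually_norm_fderiv_le hW hw
  obtain ⟨ε, hε, hball⟩ := eventually_nhds_iff_ball.1 ((hW.eventually_mem hw).and hC)
  set s := ε / 2 / (‖u‖ + 1)
  have hs : 0 < s := by positivity
  have hmem : ∀ x ∈ ball w (ε / 2), ∀ z ∈ closedBall (0 : ℂ) s, x + z • u ∈ ball w ε := by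
    intro x hx z hz
    have hzu : ‖z‖ * ‖u‖ ≤ ε / 2 := by
      rw [mem_closedBall_zero_iff] at hz
      calc ‖z‖ * ‖u‖ ≤ s * (‖u‖ + 1) := by gcongr; linarith [norm_nonneg u]
        _ = ε / 2 := by simp only [s]; field_simp
    have htri := dist_triangle (x + z • u) x w
    rw [mem_ball] at hx ⊢
    linarith [mem_closedBall.1 (add_smul_mem_closedBall (v := x) hzu)]
  have hdiff : ∀ x ∈ ball w (ε / 2), ∀ z ∈ closedBall (0 : ℂ) s,
      DifferentiableAt ℂ f (x + z • u) := fun x hx z hz =>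
    hf.differentiableAt (hW.mem_nhds (hball _ (hmem x hx z hz)).1)
  have hφ : ContinuousOn (fun z : ℂ => 1 / z ^ 2) (sphere 0 s) :=
    continuousOn_const.div (continuousOn_pow 2) fun z hz =>
      pow_ne_zero 2 (ne_of_mem_sphere hz hs.ne')
  have hint := differentiableAt_circleIntegral_smul_comp_line (ball_mem_nhds w (half_pos hε))
    hs.le hφ (fun x hx z hz => hdiff x hx z (sphere_subset_closedBall hz))
    (fun x hx z hz => (hball _ (hmem x hx z (sphere_subset_closedBall hz))).2)
  refine (hint.const_smul (2 * π * I)⁻¹).congr_of_eventuallyEq ?_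
  filter_upwards [ball_mem_nhds w (half_pos hε)] with x hx
  exact fderiv_apply_eq_circleIntegral hs (hdiff x hx)

end HolomorphicDerivative

section MatrixDifferentiability

variable {𝕜 E ι : Type*} [NontriviallyNormedField 𝕜] [NormedAddCommGroup E] [NormedSpace 𝕜 E]
  [Fintype ι] [DecidableEq ι] {M : E → Matrix ι ι 𝕜} {x : E}

theorem differentiableAt_matrix_det (hM : ∀ i j, DifferentiableAt 𝕜 (fun v => M v i j) x) :
    DifferentiableAt 𝕜 (fun v => (M v).det) x := by
  simp only [Matrix.det_apply']
  exact DifferentiableAt.fun_sum fun σ _ => ((HasFDerivAt.finsetProd fun i _ =>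
    (hM (σ i) i).hasFDerivAt).differentiableAt).const_mul _

theorem differentiableAt_matrix_inv_apply
    (hM : ∀ i j, DifferentiableAt 𝕜 (fun v => M v i j) x) (hdet : (M x).det ≠ 0) (i j : ι) :
    DifferentiableAt 𝕜 (fun v => (M v)⁻¹ i j) x := by
  simp only [Matrix.inv_def, Ring.inverse_eq_inv', Matrix.smul_apply, Matrix.adjugate_apply,
    smul_eq_mul]
  refine ((differentiableAt_matrix_det hM).inv hdet).mul (differentiableAt_matrix_det fun k l => ?_)
  by_cases hk : k = j
  · subst hk
    simp [Matrix.updateRow_self]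
  · simpa [Matrix.updateRow_ne hk] using hM k l

end MatrixDifferentiability

namespace FrobeniusStructure

variable {m : ℕ} (F : FrobeniusStructure m) {E : Type*} [NormedAddCommGroup E] [NormedSpace ℂ E]
  {a b : E → Fin m → ℂ} {x : E}

theorem differentiableAt_g (ha : DifferentiableAt ℂ a x) (hb : DifferentiableAt ℂ b x) :
    DifferentiableAt ℂ (fun v => F.g (a v) (b v)) x :=
  (F.g.toContinuousBilinearMap.hasFDerivAt_of_bilinear ha.hasFDerivAt
    hb.hasFDerivAt).differentiableAt

theorem fderiv_g_apply (ha : DifferentiableAt ℂ a x) (hb : DifferentiableAt ℂ b x) (u : E) :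
    fderiv ℂ (fun v => F.g (a v) (b v)) x u
      = F.g (fderiv ℂ a x u) (b x) + F.g (a x) (fderiv ℂ b x u) := by
  have h := F.g.toContinuousBilinearMap.fderiv_of_bilinear ha hb
  simp only [LinearMap.toContinuousBilinearMap_apply] at h
  simp [h, add_comm]

end FrobeniusStructure

namespace SubmanifoldDatum

open Matrix

variable {m n : ℕ} {F : FrobeniusStructure m} (S : SubmanifoldDatum m n F)

theorem fderiv_emb_lift {w : Fin n → ℂ} {v : Fin m → ℂ} (hv : v ∈ S.T w) :
    fderiv ℂ S.emb w (S.lift w v) = v := by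
  have hv' : v ∈ Set.range (fderiv ℂ S.emb w) := hv
  rw [lift, dif_pos hv']
  exact hv'.choose_spec

theorem g_pr_left {w : Fin n → ℂ} (hw : w ∈ S.W) (x : Fin m → ℂ) {y : Fin m → ℂ}
    (hy : y ∈ S.T w) : F.g (S.pr w x) y = F.g x y := by
  have h := S.pr_orth w hw x y hy
  rwa [map_sub, LinearMap.sub_apply, sub_eq_zero, eq_comm] at h

theorem pr_eq_of_forall_g_sub_eq_zero {w : Fin n → ℂ} (hw : w ∈ S.W) {x u : Fin m → ℂ}
    (hu : u ∈ S.T w) (horth : ∀ y ∈ S.T w, F.g (x - u) y = 0) : S.pr w x = u := by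
  obtain ⟨a, ha⟩ := S.pr_mem w hw x
  obtain ⟨b, rfl⟩ := hu
  have hmem : S.pr w x - fderiv ℂ S.emb w b ∈ S.T w := ⟨a - b, by rw [map_sub, ha]⟩
  refine sub_eq_zero.1 (S.g_nondeg_tangent w hw _ hmem fun y hy => ?_)
  have h := horth y hy
  rw [map_sub, LinearMap.sub_apply] at h ⊢
  rw [S.g_pr_left hw x hy]
  exact h

def frame (w : Fin n → ℂ) (i : Fin n) : Fin m → ℂ :=
  fderiv ℂ S.emb w (Pi.single i 1)

def gram (w : Fin n → ℂ) : Matrix (Fin n) (Fin n) ℂ :=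
  Matrix.of fun i j => F.g (S.frame w i) (S.frame w j)

theorem fderiv_emb_eq_sum_frame (w a : Fin n → ℂ) :
    fderiv ℂ S.emb w a = ∑ i, a i • S.frame w i := by
  conv_lhs => rw [← Finset.univ_sum_single a, map_sum]
  refine Finset.sum_congr rfl fun i _ => ?_
  rw [frame, ← map_smul, ← Pi.single_smul, smul_eq_mul, mul_one]

theorem g_eq_zero_of_forall_frame {w : Fin n → ℂ} {z : Fin m → ℂ}
    (h : ∀ j, F.g z (S.frame w j) = 0) : ∀ y ∈ S.T w, F.g z y = 0 := by
  rintro _ ⟨a, rfl⟩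
  simp [fderiv_emb_eq_sum_frame, h]

theorem g_sum_smul_frame (w a : Fin n → ℂ) (j : Fin n) :
    F.g (∑ i, a i • S.frame w i) (S.frame w j) = (S.gram w *ᵥ a) j := by
  simp [gram, mulVec, dotProduct, F.g_symm (S.frame w _) (S.frame w j), mul_comm]

theorem det_gram_ne_zero {w : Fin n → ℂ} (hw : w ∈ S.W) : (S.gram w).det ≠ 0 := by
  intro hdet
  obtain ⟨a, ha, hker⟩ := exists_mulVec_eq_zero_iff.2 hdet
  have hzero : fderiv ℂ S.emb w a = 0 := by
    refine S.g_nondeg_tangent w hw _ ⟨a, rfl⟩ (S.g_eq_zero_of_forall_frame fun j => ?_)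
    rw [fderiv_emb_eq_sum_frame, g_sum_smul_frame, hker, Pi.zero_apply]
  exact ha (S.demb_inj w hw (by rw [hzero, map_zero]))

theorem pr_eq_sum_frame {w : Fin n → ℂ} (hw : w ∈ S.W) (x : Fin m → ℂ) :
    S.pr w x = ∑ i, ((S.gram w)⁻¹ *ᵥ fun j => F.g x (S.frame w j)) i • S.frame w i := by
  refine S.pr_eq_of_forall_g_sub_eq_zero hw ⟨_, S.fderiv_emb_eq_sum_frame w _⟩
    (S.g_eq_zero_of_forall_frame fun j => ?_)
  have hinv : IsUnit (S.gram w).det := isUnit_iff_ne_zero.2 (S.det_gram_ne_zero hw)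
  rw [map_sub, LinearMap.sub_apply, g_sum_smul_frame, mulVec_mulVec, mul_nonsing_inv _ hinv,
    one_mulVec, sub_self]

theorem differentiableAt_frame {w : Fin n → ℂ} (hw : w ∈ S.W) (i : Fin n) :
    DifferentiableAt ℂ (fun v => S.frame v i) w :=
  S.emb_holo.differentiableAt_fderiv_apply S.W_open hw _

theorem differentiableAt_pr_apply {a : (Fin n → ℂ) → Fin m → ℂ} {w : Fin n → ℂ}
    (hw : w ∈ S.W) (ha : DifferentiableAt ℂ a w) :
    DifferentiableAt ℂ (fun v => S.pr v (a v)) w := by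
  have hgram : ∀ i j, DifferentiableAt ℂ (fun v => S.gram v i j) w := fun i j =>
    F.differentiableAt_g (S.differentiableAt_frame hw i) (S.differentiableAt_frame hw j)
  have hsum : DifferentiableAt ℂ (fun v => ∑ i,
      ((S.gram v)⁻¹ *ᵥ fun j => F.g (a v) (S.frame v j)) i • S.frame v i) w := by
    simp only [mulVec, dotProduct]
    refine DifferentiableAt.fun_sum fun i _ => DifferentiableAt.fun_smul
      (DifferentiableAt.fun_sum fun j _ => ?_) (S.differentiableAt_frame hw i)
    exact (differentiableAt_matrix_inv_apply hgram (S.det_gram_ne_zero hw) i j).mul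
      (F.differentiableAt_g ha (S.differentiableAt_frame hw j))
  exact hsum.congr_of_eventuallyEq
    (eventually_of_mem (S.W_open.mem_nhds hw) fun v hv => S.pr_eq_sum_frame hv (a v))

theorem differentiableAt_EN {w : Fin n → ℂ} (hw : w ∈ S.W) : DifferentiableAt ℂ S.EN w :=
  S.differentiableAt_pr_apply hw <|
    (F.E_holo.differentiableAt (F.U_open.mem_nhds (S.emb_maps w hw))).comp w
      (S.emb_holo.differentiableAt (S.W_open.mem_nhds hw))

theorem g_nabla_EN {X Y : (Fin n → ℂ) → Fin m → ℂ} (hX : S.IsTangentField X)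
    (hY : S.IsTangentField Y) {w : Fin n → ℂ} (hw : w ∈ S.W) :
    F.g (S.nabla X S.EN w) (Y w)
      = F.g (fderiv ℂ F.E (S.emb w) (X w)) (Y w) + F.g (S.sff X Y w) (S.ENperp w) := by
  set ℓ := S.lift w (X w)
  have hW : S.W ∈ 𝓝 w := S.W_open.mem_nhds hw
  have hYd : DifferentiableAt ℂ Y w := hY.1.differentiableAt hW
  have hembd : DifferentiableAt ℂ S.emb w := S.emb_holo.differentiableAt hW
  have hEd : DifferentiableAt ℂ F.E (S.emb w) :=
    F.E_holo.differentiableAt (F.U_open.mem_nhds (S.emb_maps w hw))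
  have hEembd : DifferentiableAt ℂ (fun v => F.E (S.emb v)) w := hEd.comp w hembd
  have hleibniz : F.g (fderiv ℂ S.EN w ℓ) (Y w) + F.g (S.EN w) (fderiv ℂ Y w ℓ)
      = F.g (fderiv ℂ F.E (S.emb w) (X w)) (Y w) + F.g (F.E (S.emb w)) (fderiv ℂ Y w ℓ) := by
    have hEq : (fun v => F.g (S.EN v) (Y v)) =ᶠ[𝓝 w] fun v => F.g (F.E (S.emb v)) (Y v) :=
      eventually_of_mem hW fun v hv => S.g_pr_left hv _ (hY.2 v hv)
    have hchain : fderiv ℂ (fun v => F.E (S.emb v)) w ℓ = fderiv ℂ F.E (S.emb w) (X w) := by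
      rw [fderiv_fun_comp w hEd hembd, ContinuousLinearMap.comp_apply,
        S.fderiv_emb_lift (hX.2 w hw)]
    rw [← F.fderiv_g_apply (S.differentiableAt_EN hw) hYd, hEq.fderiv_eq,
      F.fderiv_g_apply hEembd hYd, hchain]
  have hnabla : F.g (S.nabla X S.EN w) (Y w) = F.g (fderiv ℂ S.EN w ℓ) (Y w) :=
    S.g_pr_left hw _ (hY.2 w hw)
  have hnormal : F.g (S.ENperp w) (S.pr w (S.covD X Y w)) = 0 :=
    S.pr_orth w hw _ _ (S.pr_mem w hw _)
  have hsff : F.g (S.sff X Y w) (S.ENperp w)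
      = F.g (F.E (S.emb w)) (fderiv ℂ Y w ℓ) - F.g (S.EN w) (fderiv ℂ Y w ℓ) := by
    rw [F.g_symm, sff, map_sub, hnormal, sub_zero, ENperp, map_sub, LinearMap.sub_apply]
    rfl
  rw [hnabla, hsff]
  linear_combination hleibniz

end SubmanifoldDatum

/-- Remark 1.3(2), second implication: if the shape operator of `E_N^⊥` equals
`λ · Id`, i.e. `⟨h(X,Y), E_N^⊥⟩ = λ ⟨X,Y⟩` for all tangent fields, then the
induced Euler condition holds with constant `D_N = D + 2λ`. -/
theorem remark1_3_second {m n : ℕ} (F : FrobeniusStructure m)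
    (S : SubmanifoldDatum m n F) (lam : ℂ)
    (hlam : ∀ X Y, S.IsTangentField X → S.IsTangentField Y → ∀ w ∈ S.W,
      F.g (S.sff X Y w) (S.ENperp w) = lam * F.g (X w) (Y w)) :
    ∀ X Y, S.IsTangentField X → S.IsTangentField Y → ∀ w ∈ S.W,
      F.g (S.nabla X S.EN w) (Y w) + F.g (X w) (S.nabla Y S.EN w)
        = (F.Dconst + 2 * lam) * F.g (X w) (Y w) := by
  intro X Y hX hY w hw
  rw [F.g_symm (X w), S.g_nabla_EN hX hY hw, S.g_nabla_EN hY hX hw, hlam X Y hX hY w hw,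
    hlam Y X hY hX w hw, F.g_symm (Y w) (X w), F.g_symm _ (X w)]
  linear_combination F.euler_metric (S.emb w) (S.emb_maps w hw) (X w) (Y w)
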